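/- Let U = (U_1,…,U_d) be a d-tuple of numeration systems, A ⊂ ℤ^d a finite alphabet, and N a trim deterministic finite automaton accepting {(u,v) ∈ (A × (A_U ∪ −A_U))* : v ∈ 0*ν_U(u)}, with initial state i. Let p be a state of N, a ∈ A a letter, ℓ_1, ℓ_2 ∈ ℕ, and suppose there exist words v_1, v_2 ∈ (A_U ∪ −A_U)* not beginning with the letter 0 such that reading (0^{ℓ_1} a, v_1) and (0^{ℓ_2} a, v_2) from i both lead to p. Then ℓ_1 = ℓ_2 and v_1 = v_2. -/

import Mathlib

open scoped Classical

/-- A numeration system: a strictly increasing sequence of positive integers with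
`U 0 = 1` and bounded quotients `U (i+1) / U i`. -/
structure NumSys where
  U : ℕ → ℕ
  pos : ∀ i, 0 < U i
  base : U 0 = 1
  mono : StrictMono U
  bdd : ∃ C : ℕ, ∀ i, U (i + 1) ≤ C * U i

/-- The value `val_U` of a word `a_ℓ ⋯ a_0` over `ℤ` (most significant digit first):
`Σ_{i=0}^ℓ a_i U(i)`. -/
def valU (N : NumSys) (w : List ℤ) : ℤ :=
  ∑ i ∈ Finset.range w.length, w.reverse.getD i 0 * (N.U i : ℤ)

/-- `w` is the greedy `U`-representation of `n`: its value is `n`, its digits are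
nonnegative, its leading digit is nonzero, and every suffix `a_j ⋯ a_0` satisfies
`Σ_{i=0}^j a_i U(i) < U(j+1)`.  (For `n = 0` this forces `w = ε`.) -/
def IsGreedy (N : NumSys) (n : ℕ) (w : List ℤ) : Prop :=
  valU N w = (n : ℤ) ∧ (∀ a ∈ w, 0 ≤ a) ∧ w.head? ≠ some 0 ∧
    ∀ j, j < w.length → valU N (w.drop (w.length - (j + 1))) < (N.U (j + 1) : ℤ)

/-- The greedy `U`-representation `rep_U n` (the unique word satisfying `IsGreedy`). -/
noncomputable def repU (N : NumSys) (n : ℕ) : List ℤ :=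
  if h : ∃ w, IsGreedy N n w then h.choose else []

/-- `⌈sup_i U(i+1)/U(i)⌉`. -/
noncomputable def capU (N : NumSys) : ℤ :=
  ⌈⨆ i : ℕ, (N.U (i + 1) : ℝ) / (N.U i : ℝ)⌉

/-- The canonical alphabet `A_U = {0, …, ⌈sup_i U(i+1)/U(i)⌉ - 1}`. -/
noncomputable def alphU (N : NumSys) : Set ℤ := Set.Icc 0 (capU N - 1)

/-- The extended normalization `ν_U`: `rep_U(val_U w)` if `val_U w ≥ 0`, and the
digitwise negation of `rep_U(-val_U w)` otherwise. -/
noncomputable def normExt (N : NumSys) (w : List ℤ) : List ℤ :=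
  if 0 ≤ valU N w then repU N (valU N w).toNat
  else (repU N (-valU N w).toNat).map (fun a => -a)

/-- The `j`-th component word of a word over `ℤ^d`. -/
def comp {d : ℕ} (w : List (Fin d → ℤ)) (j : Fin d) : List ℤ := w.map (fun x => x j)

/-- Pad a word over `ℤ` with leading zeroes to length `L`. -/
def padZero (L : ℕ) (w : List ℤ) : List ℤ := List.replicate (L - w.length) 0 ++ w

/-- The `d`-dimensional extended normalization `ν_U`: the componentwise normalizations,
padded with leading zeroes to a common length. -/
noncomputable def normVec {d : ℕ} (Ns : Fin d → NumSys) (w : List (Fin d → ℤ)) :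
    List (Fin d → ℤ) :=
  (List.range (Finset.univ.sup fun j => (normExt (Ns j) (comp w j)).length)).map
    (fun i => fun j =>
      (padZero (Finset.univ.sup fun j' => (normExt (Ns j') (comp w j')).length)
        (normExt (Ns j) (comp w j))).getD i 0)

/-- The delay `d_U(w) = |ν_U(w)| - |w|`. -/
noncomputable def delayVec {d : ℕ} (Ns : Fin d → NumSys) (w : List (Fin d → ℤ)) : ℤ :=
  ((normVec Ns w).length : ℤ) - (w.length : ℤ)

/-- The product alphabet `A_U = A_{U_1} × ⋯ × A_{U_d}`. -/
noncomputable def alphProd {d : ℕ} (Ns : Fin d → NumSys) : Set (Fin d → ℤ) :=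
  {b | ∀ j, b j ∈ alphU (Ns j)}

/-- The alphabet `A_U ∪ -A_U`. -/
noncomputable def symAlph {d : ℕ} (Ns : Fin d → NumSys) : Set (Fin d → ℤ) :=
  {b | ∀ j, b j ∈ alphU (Ns j)} ∪ {b | ∀ j, -b j ∈ alphU (Ns j)}

/-- The language `{(u,v) ∈ (A × (A_U ∪ -A_U))* : v ∈ 0* ν_U(u)}`, where a word over
pairs is identified with the pair of its component words. -/
noncomputable def NormLangVec {d : ℕ} (Ns : Fin d → NumSys) (A : Set (Fin d → ℤ)) :
    Language ((Fin d → ℤ) × (Fin d → ℤ)) :=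
  {p | (∀ x ∈ p, x.1 ∈ A ∧ x.2 ∈ symAlph Ns) ∧
    ∃ k : ℕ, p.map Prod.snd =
      List.replicate k (0 : Fin d → ℤ) ++ normVec Ns (p.map Prod.fst)}

/-- A deterministic finite automaton with (possibly) partial transition function. -/
structure PDFA (α : Type) (σ : Type) where
  step : σ → α → Option σ
  start : σ
  accept : Set σ

/-- The state (if any) reached from `q` after reading `w`. -/
def PDFA.evalFrom {α σ : Type} (M : PDFA α σ) (q : σ) (w : List α) : Option σ :=
  w.foldl (fun o a => o.bind fun p => M.step p a) (some q)

/-- The language accepted by a partial DFA. -/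
def PDFA.accepts {α σ : Type} (M : PDFA α σ) : Language α :=
  {w | ∃ q ∈ M.accept, M.evalFrom M.start w = some q}

/-- A partial DFA is trim if every state is accessible from the initial state and
co-accessible to some final state. -/
def PDFA.Trim {α σ : Type} (M : PDFA α σ) : Prop :=
  ∀ q : σ, (∃ w, M.evalFrom M.start w = some q) ∧
    (∃ w, ∃ p ∈ M.accept, M.evalFrom q w = some p)

/-
Fix a word `w` leading from `p` to a final state (the automaton is trim). Both
`(0^{ℓ₁} a, v₁) w` and `(0^{ℓ₂} a, v₂) w` are then accepted, so `v₁ s` and `v₂ s`, with `s` the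
second component of `w`, lie in `0* ν_U(0^{ℓᵢ} a u)`. Leading zeroes do not change the value,
so `ν_U(0^{ℓ₁} a u) = ν_U(0^{ℓ₂} a u)`; as neither `v₁` nor `v₂` begins with `0`, this common
tail forces `v₁ = v₂`, and comparing lengths gives `ℓ₁ = ℓ₂`.
-/

lemma valU_replicate_zero_append (N : NumSys) (ℓ : ℕ) (x : List ℤ) :
    valU N (List.replicate ℓ 0 ++ x) = valU N x := by
  unfold valU
  rw [List.reverse_append, List.reverse_replicate, List.length_append,
    List.length_replicate, Nat.add_comm ℓ x.length]
  refine (Finset.sum_subset (Finset.range_subset_range.2 (Nat.le_add_right _ ℓ)) ?_).symm.trans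
    (Finset.sum_congr rfl fun i hi => ?_)
  · intro i _ hi
    rw [List.getD_append_right _ _ _ _ (by simpa using hi)]
    simp [List.getD]
  · rw [List.getD_append _ _ _ _ (by simpa using hi)]

lemma normExt_replicate_zero_append (N : NumSys) (ℓ : ℕ) (x : List ℤ) :
    normExt N (List.replicate ℓ 0 ++ x) = normExt N x := by
  simp only [normExt, valU_replicate_zero_append]

lemma comp_replicate_zero_append {d : ℕ} (ℓ : ℕ) (w : List (Fin d → ℤ)) (j : Fin d) :
    comp (List.replicate ℓ 0 ++ w) j = List.replicate ℓ 0 ++ comp w j := by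
  simp [comp]

lemma normVec_replicate_zero_append {d : ℕ} (Ns : Fin d → NumSys) (ℓ : ℕ)
    (w : List (Fin d → ℤ)) :
    normVec Ns (List.replicate ℓ 0 ++ w) = normVec Ns w := by
  simp only [normVec, comp_replicate_zero_append, normExt_replicate_zero_append]

lemma exists_snd_eq_of_mem_normLangVec {d : ℕ} {Ns : Fin d → NumSys} {A : Set (Fin d → ℤ)}
    {x w : List ((Fin d → ℤ) × (Fin d → ℤ))} {ℓ : ℕ} {u : List (Fin d → ℤ)}
    (hmem : x ++ w ∈ NormLangVec Ns A) (hx : x.map Prod.fst = List.replicate ℓ 0 ++ u) :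
    ∃ k, x.map Prod.snd ++ w.map Prod.snd =
      List.replicate k 0 ++ normVec Ns (u ++ w.map Prod.fst) := by
  obtain ⟨-, k, hk⟩ := hmem
  refine ⟨k, ?_⟩
  rwa [List.map_append, List.map_append, hx, List.append_assoc,
    normVec_replicate_zero_append] at hk

namespace PDFA

variable {α σ : Type} (M : PDFA α σ)

lemma foldl_bind_none (w : List α) :
    w.foldl (fun o a => o.bind fun p => M.step p a) (none : Option σ) = none := by
  induction w with
  | nil => rfl
  | cons a w ih => simpa using ih

lemma evalFrom_append (q : σ) (x y : List α) :
    M.evalFrom q (x ++ y) = (M.evalFrom q x).bind fun r => M.evalFrom r y := by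
  unfold evalFrom
  rw [List.foldl_append]
  cases x.foldl (fun o a => o.bind fun p => M.step p a) (some q) with
  | none => simp [foldl_bind_none]
  | some r => simp

lemma append_mem_accepts {x w : List α} {q r : σ} (hx : M.evalFrom M.start x = some q)
    (hw : M.evalFrom q w = some r) (hr : r ∈ M.accept) : x ++ w ∈ M.accepts :=
  ⟨r, hr, by rw [evalFrom_append, hx]; exact hw⟩

end PDFA

namespace List

variable {α : Type*} {a b s V : List α} {z : α} {m n : ℕ}

lemma eq_replicate_append_of_append_eq_replicate_append
    (ha : a ++ s = replicate m z ++ V) (hb : b ++ s = replicate n z ++ V) (hnm : n ≤ m) :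
    a = replicate (m - n) z ++ b := by
  refine append_cancel_right (as := a) (bs := s) ?_
  rw [ha, append_assoc, hb, ← append_assoc, ← replicate_add, Nat.sub_add_cancel hnm]

lemma eq_of_append_eq_replicate_append (ha₀ : a.head? ≠ some z) (hb₀ : b.head? ≠ some z)
    (ha : a ++ s = replicate m z ++ V) (hb : b ++ s = replicate n z ++ V) : a = b := by
  have key : ∀ {a b : List α} {m n : ℕ}, a.head? ≠ some z → a ++ s = replicate m z ++ V →
      b ++ s = replicate n z ++ V → n ≤ m → a = b := by
    intro a b m n ha₀ ha hb hnm
    have hab := eq_replicate_append_of_append_eq_replicate_append ha hb hnm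
    obtain h | h := Nat.eq_zero_or_pos (m - n)
    · simpa [h] using hab
    · obtain ⟨k, hk⟩ := Nat.exists_eq_add_of_lt h
      simp [hab, hk, replicate_succ] at ha₀
  rcases le_total n m with h | h
  · exact key ha₀ ha hb h
  · exact (key hb₀ hb ha h).symm

end List

theorem normalizer_unique_delay_general {d : ℕ} (Ns : Fin d → NumSys)
    (A : Set (Fin d → ℤ))
    (Q : Type) (M : PDFA ((Fin d → ℤ) × (Fin d → ℤ)) Q)
    (hacc : M.accepts = NormLangVec Ns A) (htrim : M.Trim)
    (p : Q) (a : Fin d → ℤ) (ℓ₁ ℓ₂ : ℕ)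
    (v₁ v₂ : List (Fin d → ℤ))
    (h0₁ : v₁.head? ≠ some (0 : Fin d → ℤ)) (h0₂ : v₂.head? ≠ some (0 : Fin d → ℤ))
    (p₁ p₂ : List ((Fin d → ℤ) × (Fin d → ℤ)))
    (hp₁fst : p₁.map Prod.fst = List.replicate ℓ₁ (0 : Fin d → ℤ) ++ [a])
    (hp₁snd : p₁.map Prod.snd = v₁)
    (hp₂fst : p₂.map Prod.fst = List.replicate ℓ₂ (0 : Fin d → ℤ) ++ [a])
    (hp₂snd : p₂.map Prod.snd = v₂)
    (hrun₁ : M.evalFrom M.start p₁ = some p)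
    (hrun₂ : M.evalFrom M.start p₂ = some p) :
    ℓ₁ = ℓ₂ ∧ v₁ = v₂ := by
  obtain ⟨-, w, r, hr, hw⟩ := htrim p
  obtain ⟨k₁, hk₁⟩ := exists_snd_eq_of_mem_normLangVec
    (hacc ▸ M.append_mem_accepts hrun₁ hw hr) hp₁fst
  obtain ⟨k₂, hk₂⟩ := exists_snd_eq_of_mem_normLangVec
    (hacc ▸ M.append_mem_accepts hrun₂ hw hr) hp₂fst
  subst hp₁snd hp₂snd
  have hv := List.eq_of_append_eq_replicate_append h0₁ h0₂ hk₁ hk₂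
  have hlen₁ := congrArg List.length hp₁fst
  have hlen₂ := congrArg List.length hp₂fst
  have hlen := congrArg List.length hv
  simp only [List.length_map, List.length_append, List.length_replicate,
    List.length_singleton] at hlen₁ hlen₂ hlen
  exact ⟨by omega, hv⟩

/-- Let `U` be a `d`-tuple of numeration systems, `A ⊂ ℤ^d` a finite alphabet and `M`
a trim DFA accepting `{(u,v) ∈ (A × (A_U ∪ -A_U))* : v ∈ 0* ν_U(u)}`, with initial
state `i`.  If, for words `v₁, v₂` over `A_U ∪ -A_U` not beginning with the letter
`0`, reading `(0^{ℓ₁} a, v₁)` and `(0^{ℓ₂} a, v₂)` from `i` both lead to the state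
`p`, then `ℓ₁ = ℓ₂` and `v₁ = v₂`. -/
theorem normalizer_unique_delay {d : ℕ} (Ns : Fin d → NumSys)
    (A : Set (Fin d → ℤ)) (hA : A.Finite)
    (Q : Type) [Fintype Q] (M : PDFA ((Fin d → ℤ) × (Fin d → ℤ)) Q)
    (hacc : M.accepts = NormLangVec Ns A) (htrim : M.Trim)
    (p : Q) (a : Fin d → ℤ) (ha : a ∈ A) (ℓ₁ ℓ₂ : ℕ)
    (v₁ v₂ : List (Fin d → ℤ))
    (hv₁ : ∀ x ∈ v₁, x ∈ symAlph Ns) (hv₂ : ∀ x ∈ v₂, x ∈ symAlph Ns)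
    (h0₁ : v₁.head? ≠ some (0 : Fin d → ℤ)) (h0₂ : v₂.head? ≠ some (0 : Fin d → ℤ))
    (p₁ p₂ : List ((Fin d → ℤ) × (Fin d → ℤ)))
    (hp₁fst : p₁.map Prod.fst = List.replicate ℓ₁ (0 : Fin d → ℤ) ++ [a])
    (hp₁snd : p₁.map Prod.snd = v₁)
    (hp₂fst : p₂.map Prod.fst = List.replicate ℓ₂ (0 : Fin d → ℤ) ++ [a])
    (hp₂snd : p₂.map Prod.snd = v₂)
    (hrun₁ : M.evalFrom M.start p₁ = some p)
    (hrun₂ : M.evalFrom M.start p₂ = some p) :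
    ℓ₁ = ℓ₂ ∧ v₁ = v₂ :=
  normalizer_unique_delay_general Ns A Q M hacc htrim p a ℓ₁ ℓ₂ v₁ v₂ h0₁ h0₂ p₁ p₂ hp₁fst hp₁snd
    hp₂fst hp₂snd hrun₁ hrun₂
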